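/- For a fixed CFG and input of length n, the number of applications of each forward step of the variant is bounded by the corresponding Earley step: 𝒱_1 ≤ ℰ_1, 𝒱_2 ≤ ℰ_2, and 𝒱_3 ≤ ℰ_3. -/

import Mathlib

/-! Formalization of Earley parsing and the Nederhof–Satta variant. -/

variable {T N : Type}

/-- A context-free grammar: a start nonterminal and a set of productions. -/
structure CFG (T N : Type) where
  initial : N
  rules : Set (N × List (Symbol T N))

/-- One rewriting step of the grammar. -/
def CFG.Produces (g : CFG T N) (u v : List (Symbol T N)) : Prop :=
  ∃ A α p q, (A, α) ∈ g.rules ∧ u = p ++ [Symbol.nonterminal A] ++ q ∧ v = p ++ α ++ q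

/-- The derivation relation ⇒* (reflexive-transitive closure of rewriting). -/
def CFG.Derives (g : CFG T N) : List (Symbol T N) → List (Symbol T N) → Prop :=
  Relation.ReflTransGen g.Produces

/-- The language of the grammar: { w | S ⇒* w }. -/
def CFG.language (g : CFG T N) : Set (List T) :=
  { w | g.Derives [Symbol.nonterminal g.initial] (w.map Symbol.terminal) }

/-- `inputSlice w i j` is the substring a_{i+1}⋯a_j of `w` (0-based: w[i..j)), as symbols. -/
def inputSlice (w : List T) (i j : ℕ) : List (Symbol T N) :=
  ((w.take j).drop i).map Symbol.terminal

/-- The least Earley table: `Earley g w A α β i j` means the dotted item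
[A → α • β] is inserted in E_{i,j}. -/
inductive Earley (g : CFG T N) (w : List T) :
    N → List (Symbol T N) → List (Symbol T N) → ℕ → ℕ → Prop where
  | init {α} : (g.initial, α) ∈ g.rules → Earley g w g.initial [] α 0 0
  | predict {B α A β i j γ} : Earley g w B α (Symbol.nonterminal A :: β) i j →
      (A, γ) ∈ g.rules → Earley g w A [] γ j j
  | scan {A α a β i j} : Earley g w A α (Symbol.terminal a :: β) i j →
      w[j]? = some a → Earley g w A (α ++ [Symbol.terminal a]) β i (j + 1)
  | complete {A α B β i k γ j} : Earley g w A α (Symbol.nonterminal B :: β) i k →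
      Earley g w B γ [] k j → (B, γ) ∈ g.rules →
      Earley g w A (α ++ [Symbol.nonterminal B]) β i j

mutual
  /-- Forward part of the variant: `VarU g w β j` means suffix item [β] ∈ U_j. -/
  inductive VarU (g : CFG T N) (w : List T) : List (Symbol T N) → ℕ → Prop where
    | init {α} : (g.initial, α) ∈ g.rules → VarU g w α 0
    | predict {A β j γ} : VarU g w (Symbol.nonterminal A :: β) j →
        (A, γ) ∈ g.rules → VarU g w γ j
    | scan {a β j} : VarU g w (Symbol.terminal a :: β) j → w[j]? = some a →
        VarU g w β (j + 1)
    | complete {B β k γ j} : VarU g w (Symbol.nonterminal B :: β) k → (B, γ) ∈ g.rules →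
        VarT g w γ k j → VarU g w β j

  /-- Backward part of the variant: `VarT g w β j m` means suffix item [β] ∈ T_{j,m}. -/
  inductive VarT (g : CFG T N) (w : List T) : List (Symbol T N) → ℕ → ℕ → Prop where
    | empty {m} : VarU g w [] m → VarT g w [] m m
    | scan {a β j m} : VarU g w (Symbol.terminal a :: β) j → w[j]? = some a →
        VarT g w β (j + 1) m → VarT g w (Symbol.terminal a :: β) j m
    | complete {B β k γ j m} : VarU g w (Symbol.nonterminal B :: β) k → (B, γ) ∈ g.rules →
        VarT g w γ k j → VarT g w β j m → VarT g w (Symbol.nonterminal B :: β) k m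
end

/-- Number of initialization steps: distinct right-hand sides of start productions. -/
noncomputable def countInit (g : CFG T N) : ℕ :=
  Set.ncard {α | (g.initial, α) ∈ g.rules}

/-- ℰ₁: applicable instantiations of Earley's prediction rule. -/
noncomputable def countE1 (g : CFG T N) (w : List T) : ℕ :=
  Set.ncard {x : N × List (Symbol T N) × N × List (Symbol T N) × ℕ × ℕ × List (Symbol T N) |
    match x with
      | (B, α, A, β, i, j, γ) =>
          Earley g w B α (Symbol.nonterminal A :: β) i j ∧ (A, γ) ∈ g.rules}

/-- ℰ₂: applicable instantiations of Earley's scanning rule. -/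
noncomputable def countE2 (g : CFG T N) (w : List T) : ℕ :=
  Set.ncard {x : N × List (Symbol T N) × T × List (Symbol T N) × ℕ × ℕ |
    match x with
      | (A, α, a, β, i, j) =>
          Earley g w A α (Symbol.terminal a :: β) i j ∧ w[j]? = some a}

/-- ℰ₃: applicable instantiations of Earley's completion rule. -/
noncomputable def countE3 (g : CFG T N) (w : List T) : ℕ :=
  Set.ncard {x : N × List (Symbol T N) × N × List (Symbol T N) × ℕ × ℕ × List (Symbol T N) × ℕ |
    match x with
      | (A, α, B, β, i, k, γ, j) =>
          Earley g w A α (Symbol.nonterminal B :: β) i k ∧ (B, γ) ∈ g.rules ∧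
        Earley g w B γ [] k j}

/-- 𝒱₁: applicable instantiations of the variant's forward prediction rule. -/
noncomputable def countV1 (g : CFG T N) (w : List T) : ℕ :=
  Set.ncard {x : N × List (Symbol T N) × ℕ × List (Symbol T N) |
    match x with
      | (A, β, j, γ) =>
          VarU g w (Symbol.nonterminal A :: β) j ∧ (A, γ) ∈ g.rules}

/-- 𝒱₂: applicable instantiations of the variant's forward scanning rule. -/
noncomputable def countV2 (g : CFG T N) (w : List T) : ℕ :=
  Set.ncard {x : T × List (Symbol T N) × ℕ |
    match x with
      | (a, β, j) =>
          VarU g w (Symbol.terminal a :: β) j ∧ w[j]? = some a}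

/-- 𝒱₃: applicable instantiations of the variant's forward completion rule. -/
noncomputable def countV3 (g : CFG T N) (w : List T) : ℕ :=
  Set.ncard {x : N × List (Symbol T N) × ℕ × List (Symbol T N) × ℕ |
    match x with
      | (B, β, k, γ, j) =>
          VarU g w (Symbol.nonterminal B :: β) k ∧ (B, γ) ∈ g.rules ∧ VarT g w γ k j}

/-- 𝒱₄: applicable instantiations of the variant's backward-initialization rule. -/
noncomputable def countV4 (g : CFG T N) (w : List T) : ℕ :=
  Set.ncard {m : ℕ | VarU g w [] m}

/-- 𝒱₅: applicable instantiations of the variant's backward scanning rule. -/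
noncomputable def countV5 (g : CFG T N) (w : List T) : ℕ :=
  Set.ncard {x : T × List (Symbol T N) × ℕ × ℕ |
    match x with
      | (a, β, j, m) =>
          VarU g w (Symbol.terminal a :: β) j ∧ w[j]? = some a ∧ VarT g w β (j + 1) m}

/-- 𝒱₆: applicable instantiations of the variant's backward completion rule. -/
noncomputable def countV6 (g : CFG T N) (w : List T) : ℕ :=
  Set.ncard {x : N × List (Symbol T N) × ℕ × List (Symbol T N) × ℕ × ℕ |
    match x with
      | (B, β, k, γ, j, m) =>
          VarU g w (Symbol.nonterminal B :: β) k ∧ (B, γ) ∈ g.rules ∧ VarT g w γ k j ∧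
        VarT g w β j m}


/-! A suffix item [β] ∈ U_j is only ever derived alongside some Earley item [A → α • β] ∈ E_{i,j},
and [β] ∈ T_{k,m} certifies that any Earley item [A → α • β] ∈ E_{i,k} completes to
[A → αβ •] ∈ E_{i,m}; one mutual induction proves both. So every applicable forward step of the
variant is obtained from an applicable Earley step by forgetting A, α and i, and there are finitely
many Earley steps because an item is a split production together with two positions ≤ |w|. -/

theorem Set.SurjOn.ncard_le {α β : Type*} {f : α → β} {s : Set α} {t : Set β}
    (h : Set.SurjOn f s t) (hs : s.Finite) : t.ncard ≤ s.ncard :=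
  (Set.ncard_le_ncard h (hs.image f)).trans (Set.ncard_image_le hs)

theorem List.finite_setOf_append_eq {α : Type*} (l : List α) :
    {p : List α × List α | p.1 ++ p.2 = l}.Finite := by
  refine (l.inits.finite_toSet.prod l.tails.finite_toSet).subset ?_
  rintro ⟨p, q⟩ rfl
  exact ⟨List.mem_inits _ _ |>.2 (List.prefix_append p q),
    List.mem_tails _ _ |>.2 (List.suffix_append p q)⟩

section

variable {g : CFG T N} {w : List T}

theorem Earley.mem_rules_and_le {A : N} {α β : List (Symbol T N)} {i j : ℕ}
    (h : Earley g w A α β i j) : (A, α ++ β) ∈ g.rules ∧ i ≤ j ∧ j ≤ w.length := by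
  induction h with
  | init hr => exact ⟨hr, le_rfl, Nat.zero_le _⟩
  | predict _ hr ih => exact ⟨hr, le_rfl, ih.2.2⟩
  | scan _ ha ih =>
    exact ⟨by simpa using ih.1, ih.2.1.trans (Nat.le_succ _),
      (List.getElem?_eq_some_iff.mp ha).1⟩
  | complete _ _ _ ih₁ ih₂ => exact ⟨by simpa using ih₁.1, ih₁.2.1.trans ih₂.2.1, ih₂.2.2⟩

variable (g w) in
def earleyItems : Set (N × List (Symbol T N) × List (Symbol T N) × ℕ × ℕ) :=
  {(A, α, β, i, j) | Earley g w A α β i j}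

theorem earleyItems_finite (hfin : g.rules.Finite) : (earleyItems g w).Finite := by
  let place (r : N × List (Symbol T N)) (x : (List (Symbol T N) × List (Symbol T N)) × ℕ × ℕ) :
      N × List (Symbol T N) × List (Symbol T N) × ℕ × ℕ :=
    (r.1, x.1.1, x.1.2, x.2.1, x.2.2)
  have hfinite : (⋃ r ∈ g.rules, place r ''
      ({p | p.1 ++ p.2 = r.2} ×ˢ Set.Iic w.length ×ˢ Set.Iic w.length)).Finite :=
    hfin.biUnion fun r _ => ((List.finite_setOf_append_eq r.2).prod
      ((Set.finite_Iic _).prod (Set.finite_Iic _))).image _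
  refine hfinite.subset ?_
  rintro ⟨A, α, β, i, j⟩ hE
  obtain ⟨hr, hij, hj⟩ := Earley.mem_rules_and_le hE
  exact Set.mem_biUnion hr ⟨((α, β), i, j), ⟨rfl, hij.trans hj, hj⟩, rfl⟩

mutual

theorem VarU.exists_earley {β : List (Symbol T N)} {j : ℕ} :
    VarU g w β j → ∃ A α i, Earley g w A α β i j
  | .init hr => ⟨_, [], 0, .init hr⟩
  | .predict hU hr =>
    have ⟨_, _, _, hE⟩ := hU.exists_earley
    ⟨_, [], _, .predict hE hr⟩
  | .scan hU ha =>
    have ⟨_, _, _, hE⟩ := hU.exists_earley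
    ⟨_, _, _, .scan hE ha⟩
  | .complete hU hr hT =>
    have ⟨_, _, _, hE⟩ := hU.exists_earley
    ⟨_, _, _, .complete hE (by simpa using hT.earley_complete (.predict hE hr)) hr⟩

theorem VarT.earley_complete {β : List (Symbol T N)} {k m : ℕ} {A : N}
    {α : List (Symbol T N)} {i : ℕ} :
    VarT g w β k m → Earley g w A α β i k → Earley g w A (α ++ β) [] i m
  | .empty _, hE => by simpa using hE
  | .scan _ ha hT, hE => by simpa using hT.earley_complete (hE.scan ha)
  | .complete _ hr hγ hβ, hE => by
    have hγ' := hγ.earley_complete (α := []) (.predict hE hr)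
    rw [List.nil_append] at hγ'
    simpa using hβ.earley_complete (hE.complete hγ' hr)

end

theorem countV1_le_countE1 (hfin : g.rules.Finite) : countV1 g w ≤ countE1 g w := by
  refine Set.SurjOn.ncard_le (f := fun (_, _, A, β, _, j, γ) => (A, β, j, γ)) ?_ ?_
  · rintro ⟨A, β, j, γ⟩ ⟨hU, hr⟩
    obtain ⟨B, α, i, hE⟩ := hU.exists_earley
    exact ⟨(B, α, A, β, i, j, γ), ⟨hE, hr⟩, rfl⟩
  · refine (((earleyItems_finite (w := w) hfin).prod hfin).image
      fun ((B, α, σ, i, j), (A, γ)) => (B, α, A, σ.tail, i, j, γ)).subset ?_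
    rintro ⟨B, α, A, β, i, j, γ⟩ ⟨hE, hr⟩
    exact ⟨((B, α, _, i, j), (A, γ)), ⟨hE, hr⟩, rfl⟩

theorem countV2_le_countE2 (hfin : g.rules.Finite) : countV2 g w ≤ countE2 g w := by
  refine Set.SurjOn.ncard_le (f := fun (_, _, a, β, _, j) => (a, β, j)) ?_ ?_
  · rintro ⟨a, β, j⟩ ⟨hU, ha⟩
    obtain ⟨A, α, i, hE⟩ := hU.exists_earley
    exact ⟨(A, α, a, β, i, j), ⟨hE, ha⟩, rfl⟩
  · refine (((earleyItems_finite (w := w) hfin).prod w.finite_toSet).image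
      fun ((A, α, σ, i, j), a) => (A, α, a, σ.tail, i, j)).subset ?_
    rintro ⟨A, α, a, β, i, j⟩ ⟨hE, ha⟩
    exact ⟨((A, α, _, i, j), a), ⟨hE, List.mem_of_getElem? ha⟩, rfl⟩

theorem countV3_le_countE3 (hfin : g.rules.Finite) : countV3 g w ≤ countE3 g w := by
  refine Set.SurjOn.ncard_le (f := fun (_, _, B, β, _, k, γ, j) => (B, β, k, γ, j)) ?_ ?_
  · rintro ⟨B, β, k, γ, j⟩ ⟨hU, hr, hT⟩
    obtain ⟨A, α, i, hE⟩ := hU.exists_earley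
    have hγ : Earley g w B γ [] k j := by simpa using hT.earley_complete (.predict hE hr)
    exact ⟨(A, α, B, β, i, k, γ, j), ⟨hE, hr, hγ⟩, rfl⟩
  · refine (((earleyItems_finite (w := w) hfin).prod (earleyItems_finite (w := w) hfin)).image
      fun ((A, α, σ, i, k), (B, γ, _, _, j)) => (A, α, B, σ.tail, i, k, γ, j)).subset ?_
    rintro ⟨A, α, B, β, i, k, γ, j⟩ ⟨hE, -, hγ⟩
    exact ⟨((A, α, _, i, k), (B, γ, [], k, j)), ⟨hE, hγ⟩, rfl⟩

end

/-- 𝒱₁ ≤ ℰ₁, 𝒱₂ ≤ ℰ₂ and 𝒱₃ ≤ ℰ₃. -/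
theorem variant_forward_steps_le (g : CFG T N) (w : List T) (hfin : g.rules.Finite) :
    countV1 g w ≤ countE1 g w ∧ countV2 g w ≤ countE2 g w ∧
      countV3 g w ≤ countE3 g w :=
  ⟨countV1_le_countE1 hfin, countV2_le_countE2 hfin, countV3_le_countE3 hfin⟩
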